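/- Let X_m, Y_m be real N×m matrices, u, v ∈ ℝ^N, and σ > 0 with ‖X_m w‖ ≥ σ‖w‖ for all w ∈ ℝ^m, with X_mᵀX_m invertible. Write X_m† = (X_mᵀX_m)⁻¹X_mᵀ, set d = ‖u‖² − uᵀ X_m X_m† u, assume d > 0, and set c = 1/d. Let X = [X_m, u] and Y = [Y_m, v] be the augmented N×(m+1) matrices, K = Y·(XᵀX)⁻¹Xᵀ and K_m = Y_m·X_m†. Then ‖K − K_m‖₂ ≤ c·‖u‖·√(1 + ‖u‖²/σ²)·√(‖Y_m‖₂² + ‖v‖²) + ‖v‖/σ. -/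

import Mathlib

/-!
Write `X† = (XᵀX)⁻¹Xᵀ`, `p = X_m†u` and `r = u - X_m p`, so that `r ⟂ range X_m` and `d = u ⬝ r`.
The two Penrose identities `ZX = 1`, `XZ = (XZ)ᵀ` pin down `Z = X†`; checking them for the
column-appended `X = [X_m, u]` gives Greville's formula, whose rows are `X_m† - c p rᵀ` and `c rᵀ`.
Hence `K - K_m = c (v - Y_m p) rᵀ` has rank one, and its norm is at most `c ‖v - Y_m p‖ ‖r‖`.
Pythagoras gives `‖r‖ ≤ ‖u‖` and `σ ‖p‖ ≤ ‖X_m p‖ ≤ ‖u‖`, and Cauchy–Schwarz in `ℝ²` bounds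
`‖v‖ + ‖Y_m‖ ‖p‖`.
-/

open scoped Matrix Matrix.Norms.L2Operator

/-- Append a column `u` to an `N × m` matrix, yielding an `N × (m+1)` matrix. -/
def appendCol {N m : ℕ} (X : Matrix (Fin N) (Fin m) ℝ) (u : Fin N → ℝ) :
    Matrix (Fin N) (Fin (m + 1)) ℝ :=
  Matrix.of fun i => Fin.snoc (X i) (u i)

open Matrix WithLp

theorem EuclideanSpace.norm_toLp_sq {n : Type*} [Fintype n] (x : n → ℝ) :
    ‖(toLp 2 x : EuclideanSpace ℝ n)‖ ^ 2 = x ⬝ᵥ x := by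
  rw [EuclideanSpace.real_norm_sq_eq]
  simp [dotProduct, sq]

namespace Matrix

section LeastSquaresInv

variable {R : Type*} [CommRing R] {n k : Type*} [Fintype n] [Fintype k] [DecidableEq k]

/-- The paper's `X†`: the Moore–Penrose pseudoinverse when `X` has full column rank, junk
otherwise. -/
noncomputable def leastSquaresInv (X : Matrix n k R) : Matrix k n R := (Xᵀ * X)⁻¹ * Xᵀ

theorem leastSquaresInv_eq_of_penrose {X : Matrix n k R} {Z : Matrix k n R}
    (hZX : Z * X = 1) (hXZ : (X * Z)ᵀ = X * Z) : leastSquaresInv X = Z := by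
  have hXXZ : Xᵀ * (X * Z) = Xᵀ := by
    rw [← hXZ, ← transpose_mul, Matrix.mul_assoc, hZX, Matrix.mul_one]
  have hinv : (Xᵀ * X)⁻¹ = Z * Zᵀ := by
    refine inv_eq_right_inv ?_
    rw [Matrix.mul_assoc, ← Matrix.mul_assoc X, ← Matrix.mul_assoc Xᵀ, hXXZ, ← transpose_mul, hZX,
      transpose_one]
  rw [leastSquaresInv, hinv, Matrix.mul_assoc, ← transpose_mul, hXZ, ← Matrix.mul_assoc, hZX,
    Matrix.one_mul]

theorem transpose_mul_leastSquaresInv (X : Matrix n k R) :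
    (X * leastSquaresInv X)ᵀ = X * leastSquaresInv X := by
  rw [leastSquaresInv, transpose_mul, transpose_mul, transpose_nonsing_inv, transpose_mul,
    transpose_transpose, Matrix.mul_assoc]

variable {X : Matrix n k R}

theorem leastSquaresInv_mul_self (hX : IsUnit (Xᵀ * X).det) : leastSquaresInv X * X = 1 := by
  rw [leastSquaresInv, Matrix.mul_assoc, nonsing_inv_mul _ hX]

theorem vecMul_residual_eq_zero (hX : IsUnit (Xᵀ * X).det) (u : n → R) :
    (u - X *ᵥ (leastSquaresInv X *ᵥ u)) ᵥ* X = 0 := by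
  rw [← mulVec_transpose, mulVec_sub, mulVec_mulVec, mulVec_mulVec, leastSquaresInv,
    ← Matrix.mul_assoc, mul_nonsing_inv _ hX, Matrix.one_mul, sub_self]

end LeastSquaresInv

section Residual

variable {n k : Type*} [Fintype n] [Fintype k] [DecidableEq k] {X : Matrix n k ℝ}

theorem norm_sq_residual_add_norm_sq_proj (hX : IsUnit (Xᵀ * X).det) (u : n → ℝ) :
    ‖(toLp 2 (u - X *ᵥ (leastSquaresInv X *ᵥ u)) : EuclideanSpace ℝ n)‖ ^ 2 +
        ‖(toLp 2 (X *ᵥ (leastSquaresInv X *ᵥ u)) : EuclideanSpace ℝ n)‖ ^ 2 =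
      ‖(toLp 2 u : EuclideanSpace ℝ n)‖ ^ 2 := by
  have horth : (u - X *ᵥ (leastSquaresInv X *ᵥ u)) ⬝ᵥ X *ᵥ (leastSquaresInv X *ᵥ u) = 0 := by
    rw [dotProduct_mulVec, vecMul_residual_eq_zero hX, zero_dotProduct]
  generalize X *ᵥ (leastSquaresInv X *ᵥ u) = q at horth ⊢
  simp only [EuclideanSpace.norm_toLp_sq, sub_dotProduct, dotProduct_sub,
    dotProduct_comm q u] at horth ⊢
  linarith

theorem norm_residual_le (hX : IsUnit (Xᵀ * X).det) (u : n → ℝ) :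
    ‖(toLp 2 (u - X *ᵥ (leastSquaresInv X *ᵥ u)) : EuclideanSpace ℝ n)‖ ≤
      ‖(toLp 2 u : EuclideanSpace ℝ n)‖ :=
  le_of_pow_le_pow_left₀ two_ne_zero (norm_nonneg _)
    (le_of_add_le_of_nonneg_left (norm_sq_residual_add_norm_sq_proj hX u).le (sq_nonneg _))

theorem norm_proj_le (hX : IsUnit (Xᵀ * X).det) (u : n → ℝ) :
    ‖(toLp 2 (X *ᵥ (leastSquaresInv X *ᵥ u)) : EuclideanSpace ℝ n)‖ ≤
      ‖(toLp 2 u : EuclideanSpace ℝ n)‖ :=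
  le_of_pow_le_pow_left₀ two_ne_zero (norm_nonneg _)
    (le_of_add_le_of_nonneg_right (norm_sq_residual_add_norm_sq_proj hX u).le (sq_nonneg _))

end Residual

section L2OpNorm

variable {𝕜 : Type*} [RCLike 𝕜] {m n : Type*} [Fintype m] [Fintype n] [DecidableEq n]

theorem l2_opNorm_vecMulVec_le (a : m → 𝕜) (b : n → 𝕜) :
    ‖vecMulVec a b‖ ≤ ‖(toLp 2 a : EuclideanSpace 𝕜 m)‖ * ‖(toLp 2 b : EuclideanSpace 𝕜 n)‖ := by
  rw [l2_opNorm_def]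
  refine ContinuousLinearMap.opNorm_le_bound _ (by positivity) fun x => ?_
  have hx : (toEuclideanLin.trans LinearMap.toContinuousLinearMap) (vecMulVec a b) x =
      (b ⬝ᵥ x) • toLp 2 a := by
    ext i
    simp [vecMulVec_mulVec, mul_comm]
  have hb : ‖b ⬝ᵥ x‖ ≤ ‖(toLp 2 b : EuclideanSpace 𝕜 n)‖ * ‖x‖ := by
    have hcs := norm_inner_le_norm (𝕜 := 𝕜) (toLp 2 (star b)) x
    rw [EuclideanSpace.inner_eq_star_dotProduct] at hcs
    simpa [EuclideanSpace.norm_eq, dotProduct_comm] using hcs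
  rw [hx, norm_smul]
  calc ‖b ⬝ᵥ x‖ * ‖toLp 2 a‖ ≤ ‖toLp 2 b‖ * ‖x‖ * ‖toLp 2 a‖ := by gcongr
    _ = _ := by ring

theorem norm_sub_mulVec_le (A : Matrix m n 𝕜) (v : m → 𝕜) (x : n → 𝕜) :
    ‖(toLp 2 (v - A *ᵥ x) : EuclideanSpace 𝕜 m)‖ ≤
      ‖(toLp 2 v : EuclideanSpace 𝕜 m)‖ + ‖A‖ * ‖(toLp 2 x : EuclideanSpace 𝕜 n)‖ := by
  rw [toLp_sub]
  exact (norm_sub_le _ _).trans (add_le_add_right (l2_opNorm_mulVec A (toLp 2 x)) _)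

end L2OpNorm

end Matrix

theorem Real.mul_add_mul_le_sqrt_mul_sqrt (a b x y : ℝ) :
    a * x + b * y ≤ √(a ^ 2 + b ^ 2) * √(x ^ 2 + y ^ 2) := by
  simpa [Fin.sum_univ_two] using Real.sum_mul_le_sqrt_mul_sqrt Finset.univ ![a, b] ![x, y]

section appendCol

variable {N m : ℕ}

@[simp]
theorem appendCol_apply_castSucc (X : Matrix (Fin N) (Fin m) ℝ) (u : Fin N → ℝ) (i : Fin N)
    (j : Fin m) : appendCol X u i j.castSucc = X i j := by
  simp [appendCol]

@[simp]
theorem appendCol_apply_last (X : Matrix (Fin N) (Fin m) ℝ) (u : Fin N → ℝ) (i : Fin N) :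
    appendCol X u i (Fin.last m) = u i := by
  simp [appendCol]

theorem appendCol_mul_transpose_appendCol (Y A : Matrix (Fin N) (Fin m) ℝ) (v w : Fin N → ℝ) :
    appendCol Y v * (appendCol A w)ᵀ = Y * Aᵀ + vecMulVec v w := by
  ext i j
  simp [mul_apply, Fin.sum_univ_castSucc, vecMulVec_apply]

theorem transpose_appendCol_mul_appendCol_eq_one {A X : Matrix (Fin N) (Fin m) ℝ}
    {w u : Fin N → ℝ} (hAX : Aᵀ * X = 1) (hAu : Aᵀ *ᵥ u = 0) (hwX : w ᵥ* X = 0)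
    (hwu : w ⬝ᵥ u = 1) : (appendCol A w)ᵀ * appendCol X u = 1 := by
  ext i j
  induction i using Fin.lastCases with
  | last =>
    induction j using Fin.lastCases with
    | last => simpa [mul_apply, dotProduct] using hwu
    | cast j =>
      simpa [mul_apply, vecMul, dotProduct, (Fin.castSucc_lt_last j).ne'] using congrFun hwX j
  | cast i =>
    induction j using Fin.lastCases with
    | last =>
      simpa [mul_apply, mulVec, dotProduct, (Fin.castSucc_lt_last i).ne] using congrFun hAu i
    | cast j => simpa [mul_apply, one_apply] using congrFun₂ hAX i j

variable {Xm : Matrix (Fin N) (Fin m) ℝ} {u : Fin N → ℝ} {p : Fin m → ℝ} {r : Fin N → ℝ} {c : ℝ}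

theorem leastSquaresInv_appendCol (hXm : IsUnit (Xmᵀ * Xm).det)
    (hp : leastSquaresInv Xm *ᵥ u = p) (hr : u - Xm *ᵥ p = r) (hc : c * (u ⬝ᵥ r) = 1) :
    leastSquaresInv (appendCol Xm u) =
      (appendCol ((leastSquaresInv Xm)ᵀ - c • vecMulVec r p) (c • r))ᵀ := by
  have hrX : r ᵥ* Xm = 0 := hr ▸ hp ▸ vecMul_residual_eq_zero hXm u
  have hXZ : appendCol Xm u * (appendCol ((leastSquaresInv Xm)ᵀ - c • vecMulVec r p) (c • r))ᵀ =
      Xm * leastSquaresInv Xm + c • vecMulVec r r := by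
    rw [appendCol_mul_transpose_appendCol]
    calc _ = Xm * leastSquaresInv Xm + c • vecMulVec (u - Xm *ᵥ p) r := by
          simp only [transpose_sub, transpose_smul, transpose_transpose, transpose_vecMulVec,
            Matrix.mul_sub, Matrix.mul_smul, mul_vecMulVec, vecMulVec_smul, sub_vecMulVec,
            smul_sub]
          abel
      _ = _ := by rw [hr]
  apply leastSquaresInv_eq_of_penrose
  · apply transpose_appendCol_mul_appendCol_eq_one
    · simp [Matrix.sub_mul, Matrix.smul_mul, vecMulVec_mul, hrX, leastSquaresInv_mul_self hXm]
    · simp [sub_mulVec, smul_mulVec, vecMulVec_mulVec, hp, dotProduct_comm r, smul_smul, hc]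
    · simp [smul_vecMul, hrX]
    · rw [smul_dotProduct, smul_eq_mul, dotProduct_comm, hc]
  · rw [hXZ, transpose_add, transpose_smul, transpose_vecMulVec, transpose_mul_leastSquaresInv]

theorem appendCol_mul_leastSquaresInv_appendCol_sub (Ym : Matrix (Fin N) (Fin m) ℝ)
    (v : Fin N → ℝ) (hXm : IsUnit (Xmᵀ * Xm).det)
    (hp : leastSquaresInv Xm *ᵥ u = p) (hr : u - Xm *ᵥ p = r) (hc : c * (u ⬝ᵥ r) = 1) :
    appendCol Ym v * leastSquaresInv (appendCol Xm u) - Ym * leastSquaresInv Xm =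
      c • vecMulVec (v - Ym *ᵥ p) r := by
  rw [leastSquaresInv_appendCol hXm hp hr hc, appendCol_mul_transpose_appendCol]
  simp only [transpose_sub, transpose_smul, transpose_transpose, transpose_vecMulVec,
    Matrix.mul_sub, Matrix.mul_smul, mul_vecMulVec, vecMulVec_smul, sub_vecMulVec, smul_sub]
  abel

end appendCol

/-- Proposition 5.5 (operator 2-norm perturbation under column deletion). -/
theorem opNorm_perturbation_column_deletion {N m : ℕ}
    (Xm Ym : Matrix (Fin N) (Fin m) ℝ)
    (u v : EuclideanSpace ℝ (Fin N))
    (σ : ℝ) (hσ : 0 < σ)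
    (hXmσ : ∀ w : EuclideanSpace ℝ (Fin m),
      σ * ‖w‖ ≤ ‖(EuclideanSpace.equiv (Fin N) ℝ).symm (Xm *ᵥ w)‖)
    (hinv : IsUnit (Xmᵀ * Xm).det)
    (d : ℝ) (hd : d = ‖u‖ ^ 2 - u ⬝ᵥ ((Xm * ((Xmᵀ * Xm)⁻¹ * Xmᵀ)) *ᵥ u))
    (hd0 : 0 < d) (c : ℝ) (hc : c = 1 / d) :
    ‖appendCol Ym v * (((appendCol Xm u)ᵀ * appendCol Xm u)⁻¹ * (appendCol Xm u)ᵀ) -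
        Ym * ((Xmᵀ * Xm)⁻¹ * Xmᵀ)‖ ≤
      c * ‖u‖ * Real.sqrt (1 + ‖u‖ ^ 2 / σ ^ 2) * Real.sqrt (‖Ym‖ ^ 2 + ‖v‖ ^ 2) +
        ‖v‖ / σ := by
  set p := leastSquaresInv Xm *ᵥ u
  set r : Fin N → ℝ := u - Xm *ᵥ p
  have hdr : d = u ⬝ᵥ r := by
    rw [hd, ← mulVec_mulVec, dotProduct_sub, ← EuclideanSpace.norm_toLp_sq, toLp_ofLp]
    rfl
  have hcd : c * (u ⬝ᵥ r) = 1 := by rw [← hdr, hc, one_div_mul_cancel hd0.ne']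
  change ‖appendCol Ym v * leastSquaresInv (appendCol Xm u) - Ym * leastSquaresInv Xm‖ ≤ _
  rw [appendCol_mul_leastSquaresInv_appendCol_sub Ym v hinv rfl rfl hcd]
  have hc0 : 0 ≤ c := by rw [hc]; positivity
  have hr : ‖(toLp 2 r : EuclideanSpace ℝ (Fin N))‖ ≤ ‖u‖ := by
    simpa only [toLp_ofLp] using norm_residual_le hinv u
  have hXp : ‖(toLp 2 (Xm *ᵥ p) : EuclideanSpace ℝ (Fin N))‖ ≤ ‖u‖ := by
    simpa only [toLp_ofLp] using norm_proj_le hinv u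
  have hp : ‖(toLp 2 p : EuclideanSpace ℝ (Fin m))‖ ≤ ‖u‖ / σ :=
    (le_div_iff₀' hσ).2 ((hXmσ (toLp 2 p)).trans hXp)
  have hcs := Real.mul_add_mul_le_sqrt_mul_sqrt 1 (‖u‖ / σ) ‖v‖ ‖Ym‖
  rw [one_pow, one_mul, div_pow, add_comm (‖v‖ ^ 2)] at hcs
  calc ‖c • vecMulVec (⇑v - Ym *ᵥ p) r‖
      ≤ c * ((‖v‖ + ‖Ym‖ * ‖(toLp 2 p : EuclideanSpace ℝ (Fin m))‖) * ‖u‖) := by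
        grw [norm_smul_le, l2_opNorm_vecMulVec_le, Real.norm_of_nonneg hc0, norm_sub_mulVec_le,
          toLp_ofLp, hr]
    _ ≤ c * (Real.sqrt (1 + ‖u‖ ^ 2 / σ ^ 2) * Real.sqrt (‖Ym‖ ^ 2 + ‖v‖ ^ 2) * ‖u‖) := by
        grw [hp]
        gcongr
        linarith [mul_comm ‖Ym‖ (‖u‖ / σ)]
    _ = c * ‖u‖ * Real.sqrt (1 + ‖u‖ ^ 2 / σ ^ 2) * Real.sqrt (‖Ym‖ ^ 2 + ‖v‖ ^ 2) := by ring
    _ ≤ _ := le_add_of_nonneg_right (by positivity)
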